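/- arXiv:1905.08650 — 2 statements merged into one kernel-verified Lean document; each statement's English description precedes it below -/
import Mathlib

section
/- Let M, D > 0 and let i, N be natural numbers with 1 ≤ i ≤ N. Let (t_n), (K_n) be nonnegative real numbers for i ≤ n ≤ N with Σ_{n=i}^N t_n > 0, let (J_n)_{i ≤ n ≤ N} be real numbers, and let (a_n)_{i ≤ n ≤ N+1} be nonnegative real numbers satisfying a_{n+1} ≤ a_n(1 + 2 t_n K_n) − 2 t_n J_n + t_n² M + 2 t_n K_n for all i ≤ n ≤ N, and a_n ≤ 4D² for all i ≤ n ≤ N. Define γ_n := t_n / (Σ_{ℓ=i}^N t_ℓ). Then Σ_{n=i}^N γ_n J_n ≤ (4D² + Σ_{n=i}^N [8 t_n K_n D² + t_n² M + 2 t_n K_n]) / (2 Σ_{n=i}^N t_n). -/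
/-!
Absorbing the bias term `2 tₙ Kₙ aₙ ≤ 8 tₙ Kₙ D²` turns the recursion into
`2 tₙ Jₙ ≤ aₙ - aₙ₊₁ + cₙ`. Summing telescopes the `aₙ`, leaving
`∑ 2 tₙ Jₙ ≤ aᵢ + ∑ cₙ ≤ 4 D² + ∑ cₙ`, and dividing by `2 ∑ tₙ` gives the averaged bound.
-/

open Finset

lemma two_mul_mul_le_sub_add_of_recursion {a a' t K J M B : ℝ} (ht : 0 ≤ t) (hK : 0 ≤ K)
    (haB : a ≤ B) (hrec : a' ≤ a * (1 + 2 * t * K) - 2 * t * J + t ^ 2 * M + 2 * t * K) :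
    2 * t * J ≤ a - a' + (2 * t * K * B + t ^ 2 * M + 2 * t * K) := by
  have hbias : 2 * t * K * a ≤ 2 * t * K * B := mul_le_mul_of_nonneg_left haB (by positivity)
  linarith

lemma Finset.sum_Icc_le_sub_add_sum_of_le {g a c : ℕ → ℝ} {m n : ℕ} (hmn : m ≤ n)
    (h : ∀ k ∈ Icc m n, g k ≤ a k - a (k + 1) + c k) :
    ∑ k ∈ Icc m n, g k ≤ a m - a (n + 1) + ∑ k ∈ Icc m n, c k :=
  calc ∑ k ∈ Icc m n, g k ≤ ∑ k ∈ Icc m n, (-(a (k + 1) - a k) + c k) :=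
        sum_le_sum fun k hk => by linarith [h k hk]
    _ = a m - a (n + 1) + ∑ k ∈ Icc m n, c k := by
        rw [sum_add_distrib, sum_neg_distrib, sum_Icc_sub hmn]
        ring

lemma Finset.sum_div_sum_mul_le_div {ι : Type*} {s : Finset ι} {t J : ι → ℝ} {C : ℝ}
    (hS : 0 < ∑ l ∈ s, t l) (h : ∑ n ∈ s, 2 * t n * J n ≤ C) :
    ∑ n ∈ s, (t n / ∑ l ∈ s, t l) * J n ≤ C / (2 * ∑ n ∈ s, t n) := by
  rw [le_div_iff₀ (by positivity), sum_mul]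
  refine le_of_eq_of_le (sum_congr rfl fun n _ => ?_) h
  field_simp

theorem stmt_9_general (M D : ℝ)
    (i N : ℕ) (hiN : i ≤ N)
    (t K J a : ℕ → ℝ)
    (ht : ∀ n : ℕ, i ≤ n → n ≤ N → 0 ≤ t n)
    (hK : ∀ n : ℕ, i ≤ n → n ≤ N → 0 ≤ K n)
    (htsum : 0 < ∑ n ∈ Finset.Icc i N, t n)
    (ha : ∀ n : ℕ, i ≤ n → n ≤ N + 1 → 0 ≤ a n)
    (hrec : ∀ n : ℕ, i ≤ n → n ≤ N →
      a (n + 1) ≤ a n * (1 + 2 * t n * K n) - 2 * t n * J n + (t n) ^ 2 * M + 2 * t n * K n)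
    (haD : ∀ n : ℕ, i ≤ n → n ≤ N → a n ≤ 4 * D ^ 2) :
    ∑ n ∈ Finset.Icc i N, (t n / ∑ l ∈ Finset.Icc i N, t l) * J n
      ≤ (4 * D ^ 2 + ∑ n ∈ Finset.Icc i N,
          (8 * t n * K n * D ^ 2 + (t n) ^ 2 * M + 2 * t n * K n))
        / (2 * ∑ n ∈ Finset.Icc i N, t n) := by
  apply sum_div_sum_mul_le_div htsum
  have hstep : ∀ n ∈ Icc i N, 2 * t n * J n
      ≤ a n - a (n + 1) + (8 * t n * K n * D ^ 2 + t n ^ 2 * M + 2 * t n * K n) := by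
    intro n hn
    obtain ⟨hin, hnN⟩ := mem_Icc.mp hn
    have := two_mul_mul_le_sub_add_of_recursion (ht n hin hnN) (hK n hin hnN) (haD n hin hnN)
      (hrec n hin hnN)
    linarith
  have htelescope := sum_Icc_le_sub_add_sum_of_le hiN hstep
  linarith [ha (N + 1) (by omega) le_rfl, haD i le_rfl hiN]

/-- Deterministic content of estimates (3.9)–(3.13): averaged objective error bound. -/
theorem stmt_9 (M D : ℝ) (hM : 0 < M) (hD : 0 < D)
    (i N : ℕ) (hi : 1 ≤ i) (hiN : i ≤ N)
    (t K J a : ℕ → ℝ)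
    (ht : ∀ n : ℕ, i ≤ n → n ≤ N → 0 ≤ t n)
    (hK : ∀ n : ℕ, i ≤ n → n ≤ N → 0 ≤ K n)
    (htsum : 0 < ∑ n ∈ Finset.Icc i N, t n)
    (ha : ∀ n : ℕ, i ≤ n → n ≤ N + 1 → 0 ≤ a n)
    (hrec : ∀ n : ℕ, i ≤ n → n ≤ N →
      a (n + 1) ≤ a n * (1 + 2 * t n * K n) - 2 * t n * J n + (t n) ^ 2 * M + 2 * t n * K n)
    (haD : ∀ n : ℕ, i ≤ n → n ≤ N → a n ≤ 4 * D ^ 2) :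
    ∑ n ∈ Finset.Icc i N, (t n / ∑ l ∈ Finset.Icc i N, t l) * J n
      ≤ (4 * D ^ 2 + ∑ n ∈ Finset.Icc i N,
          (8 * t n * K n * D ^ 2 + (t n) ^ 2 * M + 2 * t n * K n))
        / (2 * ∑ n ∈ Finset.Icc i N, t n) :=
  stmt_9_general M D i N hiN t K J a ht hK htsum ha hrec haD
end

section
/- Let θ, D, M > 0 and let i, N be natural numbers with 1 ≤ i ≤ N. Let K_n ≥ 0 for i ≤ n ≤ N and define step sizes t_n := θD/√(M n). Then (4D² + Σ_{n=i}^N [8 t_n K_n D² + t_n² M + 2 t_n K_n]) / (2 Σ_{n=i}^N t_n) ≤ (1/√N) · [ 2 D √M · N/(θ(N−i+1)) + ((4D²+1)·N/(N−i+1)) · Σ_{n=i}^N K_n/√n + θ D √M · N/(2i) ]. -/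
/-!
With `e = θD/√M` the step sizes are `t n = e/√n`, so `∑ t n = e ∑ 1/√n` and the numerator is
`4D² + (8D² + 2) e ∑ K n/√n + e² M ∑ 1/n`. Bounding each term of `∑ 1/n` by `1/i` and each term
of `∑ 1/√n` from below by `1/√N` can only enlarge the quotient, because `K n ≥ 0` keeps the
numerator nonnegative; the resulting expression simplifies to the right-hand side.
-/

open Finset Real

lemma natCast_card_Icc {i N : ℕ} (h : i ≤ N + 1) : (#(Icc i N) : ℝ) = N - i + 1 := by
  rw [Nat.card_Icc, Nat.cast_sub h]
  push_cast
  ring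

lemma sum_Icc_one_div_le {i : ℕ} (hi : 0 < i) (N : ℕ) :
    ∑ n ∈ Icc i N, (1 : ℝ) / n ≤ #(Icc i N) / i := by
  rw [div_eq_mul_one_div, ← nsmul_eq_mul]
  refine sum_le_card_nsmul _ _ _ fun n hn => ?_
  exact one_div_le_one_div_of_le (by positivity) (by exact_mod_cast (mem_Icc.1 hn).1)

lemma card_div_sqrt_le_sum_Icc_one_div_sqrt {i : ℕ} (hi : 0 < i) (N : ℕ) :
    #(Icc i N) / √N ≤ ∑ n ∈ Icc i N, 1 / √(n : ℝ) := by
  rw [div_eq_mul_one_div, ← nsmul_eq_mul]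
  refine card_nsmul_le_sum _ _ _ fun n hn => ?_
  obtain ⟨hin, hnN⟩ := mem_Icc.1 hn
  exact one_div_le_one_div_of_le (sqrt_pos.2 (by exact_mod_cast hi.trans_le hin))
    (sqrt_le_sqrt (by exact_mod_cast hnN))

lemma sum_step_eq {t : ℕ → ℝ} {e : ℝ} (ht : ∀ n : ℕ, t n = e / √n) (s : Finset ℕ) :
    ∑ n ∈ s, t n = e * ∑ n ∈ s, 1 / √(n : ℝ) := by
  simp only [ht, mul_sum, mul_one_div]

lemma sum_objective_terms_eq {t : ℕ → ℝ} {e : ℝ} (ht : ∀ n : ℕ, t n = e / √n) (s : Finset ℕ)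
    (D M : ℝ) (K : ℕ → ℝ) :
    ∑ n ∈ s, (8 * t n * K n * D ^ 2 + t n ^ 2 * M + 2 * t n * K n)
      = (8 * D ^ 2 + 2) * e * ∑ n ∈ s, K n / √n + e ^ 2 * M * ∑ n ∈ s, 1 / (n : ℝ) := by
  rw [mul_sum, mul_sum, ← sum_add_distrib]
  refine sum_congr rfl fun n _ => ?_
  rw [ht, div_pow, sq_sqrt n.cast_nonneg]
  ring

/-- Variable-step-size estimate (3.13) with t_n = θD/√(Mn). -/
theorem stmt_12 (θ D M : ℝ) (hθ : 0 < θ) (hD : 0 < D) (hM : 0 < M)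
    (i N : ℕ) (hi : 1 ≤ i) (hiN : i ≤ N)
    (K : ℕ → ℝ) (hK : ∀ n : ℕ, i ≤ n → n ≤ N → 0 ≤ K n)
    (t : ℕ → ℝ) (ht : ∀ n : ℕ, t n = θ * D / Real.sqrt (M * n)) :
    (4 * D ^ 2 + ∑ n ∈ Finset.Icc i N,
        (8 * t n * K n * D ^ 2 + (t n) ^ 2 * M + 2 * t n * K n))
      / (2 * ∑ n ∈ Finset.Icc i N, t n)
    ≤ (1 / Real.sqrt N) *
        (2 * D * Real.sqrt M * N / (θ * ((N : ℝ) - i + 1))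
          + ((4 * D ^ 2 + 1) * N / ((N : ℝ) - i + 1))
              * ∑ n ∈ Finset.Icc i N, K n / Real.sqrt n
          + θ * D * Real.sqrt M * N / (2 * i)) := by
  set e := θ * D / √M with he
  have hstep (n : ℕ) : t n = e / √n := by rw [ht, sqrt_mul hM.le, div_mul_eq_div_div]
  have hN : (0 : ℝ) < N := by exact_mod_cast hi.trans hiN
  have hc : (0 : ℝ) < N - i + 1 := by
    have : (i : ℝ) ≤ N := by exact_mod_cast hiN
    linarith
  have hKsum : 0 ≤ ∑ n ∈ Icc i N, K n / √n := sum_nonneg fun n hn =>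
    div_nonneg (hK n (mem_Icc.1 hn).1 (mem_Icc.1 hn).2) (sqrt_nonneg _)
  have hcard := natCast_card_Icc (hiN.trans N.le_succ)
  have hsum_inv := sum_Icc_one_div_le hi N
  have hsum_inv_sqrt := card_div_sqrt_le_sum_Icc_one_div_sqrt hi N
  rw [hcard] at hsum_inv hsum_inv_sqrt
  rw [sum_objective_terms_eq hstep, sum_step_eq hstep]
  calc _ ≤ (4 * D ^ 2 + ((8 * D ^ 2 + 2) * e * ∑ n ∈ Icc i N, K n / √n
              + e ^ 2 * M * ((N - i + 1) / i))) / (2 * (e * ((N - i + 1) / √N))) := by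
        gcongr
    _ = _ := by
        rw [he]
        field_simp
        ring_nf
        rw [sq_sqrt hM.le, sq_sqrt hN.le]
        ring
end
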